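/- (Thermodynamic consistency of the flux.) For every (x,y) ∈ ℝ², the sign of the steady-state flux is determined by the thermodynamic drive alone: Ψ(x,y) > 0 if and only if S·e^(Δμ) > P (equivalently, if and only if ΔG = ln(P/S) − Δμ < 0); Ψ(x,y) = 0 if and only if S·e^(Δμ) = P; and Ψ(x,y) < 0 if and only if S·e^(Δμ) < P. -/

import Mathlib

/-!
Eliminating `pES` and `pEP` from the balance equations at `ES` and `EP` gives
`Ψ · (bf + cf + bd) = π_E · (acf − bdg)`, and `π_E > 0`, so the flux has the sign of the cycle
affinity `acf − bdg`. The Metropolis-type catalytic rates obey local detailed balance,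
`c = d · e^(x − y + Δμ)`, and with it `acf − bdg = k0 k1 e^x d · (S e^Δμ − P)`: the
binding energies `x, y` enter only through a positive factor.
-/

open Real

/-- A probability vector `(pE, pES, pEP)` is a stationary distribution of the
three-state cycle chain with rates `a,b,c,d,f,g` if its entries are nonnegative,
sum to 1, and satisfy the global balance equations. -/
def IsStat (a b c d f g pE pES pEP : ℝ) : Prop :=
  0 ≤ pE ∧ 0 ≤ pES ∧ 0 ≤ pEP ∧ pE + pES + pEP = 1 ∧
  (a + g) * pE = b * pES + f * pEP ∧
  (b + c) * pES = a * pE + d * pEP ∧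
  (d + f) * pEP = c * pES + g * pE

namespace IsStat

variable {a b c d f g pE pES pEP : ℝ}

theorem pE_pos (h : IsStat a b c d f g pE pES pEP) (hb : 0 < b) (hf : 0 < f) : 0 < pE := by
  obtain ⟨hE, hES, hEP, hsum, hbalE, -, -⟩ := h
  refine hE.lt_of_ne fun hE0 => ?_
  subst hE0
  have hES0 : pES = 0 := by nlinarith [mul_nonneg hf.le hEP]
  have hEP0 : pEP = 0 := by nlinarith [mul_nonneg hb.le hES]
  simp [hES0, hEP0] at hsum

theorem flux_mul_eq (h : IsStat a b c d f g pE pES pEP) :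
    (a * pE - b * pES) * (b * f + c * f + b * d) = pE * (a * c * f - b * d * g) := by
  obtain ⟨-, -, -, -, -, hbalES, hbalEP⟩ := h
  linear_combination -(b * (d + f)) * hbalES - b * d * hbalEP

theorem sign_flux (h : IsStat a b c d f g pE pES pEP)
    (hb : 0 < b) (hc : 0 ≤ c) (hd : 0 ≤ d) (hf : 0 < f) :
    SignType.sign (a * pE - b * pES) = SignType.sign (a * c * f - b * d * g) := by
  have hdenom : 0 < b * f + c * f + b * d := by positivity
  have hflux := congrArg SignType.sign h.flux_mul_eq
  rwa [sign_mul, sign_mul, sign_pos hdenom, sign_pos (h.pE_pos hb hf), mul_one, one_mul]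
    at hflux

end IsStat

theorem min_one_exp_eq_exp_mul (u : ℝ) : min 1 (exp u) = exp u * min 1 (exp (-u)) := by
  rcases le_total u 0 with hu | hu
  · rw [min_eq_right (exp_le_one_iff.mpr hu), min_eq_left (one_le_exp (by linarith)), mul_one]
  · rw [min_eq_left (one_le_exp hu), min_eq_right (exp_le_one_iff.mpr (by linarith)),
      ← exp_add, add_neg_cancel, exp_zero]

theorem cycle_affinity_eq (k0 k1 kcat S P dmu dGc x y : ℝ) :
    k0 * S * (kcat * min 1 (exp (x - y + dmu + dGc))) * (k1 * exp y)
        - k0 * exp x * (kcat * exp dGc * min 1 (exp (y - x - dmu - dGc))) * (k1 * P)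
      = k0 * k1 * exp x * (kcat * exp dGc * min 1 (exp (y - x - dmu - dGc)))
          * (S * exp dmu - P) := by
  have hexp : exp (x - y + dmu + dGc) * exp y = exp x * exp dmu * exp dGc := by
    simp only [← exp_add]
    ring_nf
  rw [min_one_exp_eq_exp_mul, show -(x - y + dmu + dGc) = y - x - dmu - dGc by ring]
  linear_combination k0 * S * kcat * k1 * min 1 (exp (y - x - dmu - dGc)) * hexp

theorem log_div_sub_neg_iff {S P dmu : ℝ} (hS : 0 < S) (hP : 0 < P) :
    P < S * exp dmu ↔ log (P / S) - dmu < 0 := by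
  rw [sub_neg, log_lt_iff_lt_exp (div_pos hP hS), div_lt_iff₀ hS, mul_comm]

theorem stmt_14_general
    (k0 k1 kcat S P dmu dGc : ℝ)
    (hk0 : 0 < k0) (hk1 : 0 < k1) (hkcat : 0 < kcat) (hS : 0 < S) (hP : 0 < P)
    (pE pES pEP Psi : ℝ → ℝ → ℝ)
    (hstat : ∀ x y : ℝ,
      IsStat (k0 * S) (k0 * exp x)
        (kcat * min 1 (exp (x - y + dmu + dGc)))
        (kcat * exp dGc * min 1 (exp (y - x - dmu - dGc)))
        (k1 * exp y) (k1 * P)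
        (pE x y) (pES x y) (pEP x y))
    (hPsi : ∀ x y : ℝ, Psi x y = k0 * S * pE x y - k0 * exp x * pES x y)
    : ∀ x y : ℝ,
      (0 < Psi x y ↔ P < S * exp dmu) ∧
      (P < S * exp dmu ↔ Real.log (P / S) - dmu < 0) ∧
      (Psi x y = 0 ↔ S * exp dmu = P) ∧
      (Psi x y < 0 ↔ S * exp dmu < P) := by
  intro x y
  have hd : 0 < kcat * exp dGc * min 1 (exp (y - x - dmu - dGc)) := by positivity
  have hsign : SignType.sign (Psi x y) = SignType.sign (S * exp dmu - P) := by
    rw [hPsi, (hstat x y).sign_flux (by positivity) (by positivity) hd.le (by positivity),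
      cycle_affinity_eq, sign_mul, sign_pos (by positivity), one_mul]
  refine ⟨?_, log_div_sub_neg_iff hS hP, ?_, ?_⟩
  · rw [← sign_eq_one_iff, hsign, sign_eq_one_iff, sub_pos]
  · rw [← _root_.sign_eq_zero_iff, hsign, _root_.sign_eq_zero_iff, sub_eq_zero]
  · rw [← sign_eq_neg_one_iff, hsign, sign_eq_neg_one_iff, sub_neg]

/-- Thermodynamic consistency: the sign of the steady-state flux is determined
by the thermodynamic drive alone. -/
theorem stmt_14
    (k0 k1 kcat S P dmu dGc : ℝ)
    (hk0 : 0 < k0) (hk1 : 0 < k1) (hkcat : 0 < kcat) (hS : 0 < S) (hP : 0 < P)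
    (pE pES pEP R Psi : ℝ → ℝ → ℝ)
    (hstat : ∀ x y : ℝ,
      IsStat (k0 * S) (k0 * exp x)
        (kcat * min 1 (exp (x - y + dmu + dGc)))
        (kcat * exp dGc * min 1 (exp (y - x - dmu - dGc)))
        (k1 * exp y) (k1 * P)
        (pE x y) (pES x y) (pEP x y))
    (hR : ∀ x y : ℝ, R x y = pES x y + pEP x y)
    (hPsi : ∀ x y : ℝ, Psi x y = k0 * S * pE x y - k0 * exp x * pES x y)
    : ∀ x y : ℝ,
      (0 < Psi x y ↔ P < S * exp dmu) ∧
      (P < S * exp dmu ↔ Real.log (P / S) - dmu < 0) ∧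
      (Psi x y = 0 ↔ S * exp dmu = P) ∧
      (Psi x y < 0 ↔ S * exp dmu < P) :=
  stmt_14_general k0 k1 kcat S P dmu dGc hk0 hk1 hkcat hS hP pE pES pEP Psi hstat hPsi
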